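/- The vectorial distance d⃗ on positive definite matrices satisfies d⃗(p₁,q₁) = d⃗(p₂,q₂) if and only if there exists an invertible matrix g with g p₁ gᵀ = p₂ and g q₁ gᵀ = q₂. -/

import Mathlib

open Matrix

noncomputable section

variable {n : ℕ}

/-- The `t`-th power of a symmetric matrix, defined via the spectral decomposition
(junk value if the matrix is not symmetric). -/
noncomputable def mpow (A : Matrix (Fin n) (Fin n) ℝ) (t : ℝ) : Matrix (Fin n) (Fin n) ℝ :=
  if h : A.IsHermitian then
    (h.eigenvectorUnitary : Matrix (Fin n) (Fin n) ℝ) *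
      Matrix.diagonal (fun i => (h.eigenvalues i) ^ t) *
      (star (h.eigenvectorUnitary : Matrix (Fin n) (Fin n) ℝ))
  else A

/-- Eigenvalues of a symmetric matrix, listed in nonincreasing order
(junk value `0` if the matrix is not symmetric). -/
noncomputable def eigsDesc (A : Matrix (Fin n) (Fin n) ℝ) : Fin n → ℝ :=
  if h : A.IsHermitian then fun i => h.eigenvalues (Tuple.sort h.eigenvalues i.rev) else 0

/-- Singular values of a square real matrix, in nonincreasing order. -/
noncomputable def svals (g : Matrix (Fin n) (Fin n) ℝ) : Fin n → ℝ :=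
  fun i => Real.sqrt (eigsDesc (gᵀ * g) i)

/-- The vector `σ⃗(g)` of base-2 logarithms of the singular values of `g`,
in nonincreasing order. -/
noncomputable def sigmaVec (g : Matrix (Fin n) (Fin n) ℝ) : Fin n → ℝ :=
  fun i => Real.logb 2 (svals g i)

/-- The vectorial distance `d⃗(p,q) = 2 σ⃗(p^{-1/2} q^{1/2})`. -/
noncomputable def vecd (p q : Matrix (Fin n) (Fin n) ℝ) : Fin n → ℝ :=
  fun i => 2 * sigmaVec (mpow p (-(1/2)) * mpow q (1/2)) i

/-- Partial sum of the first `k` components of a vector in `ℝⁿ`. -/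
noncomputable def psum (ξ : Fin n → ℝ) (k : ℕ) : ℝ :=
  ∑ i ∈ Finset.univ.filter (fun i : Fin n => (i : ℕ) < k), ξ i

/-- The majorization-type partial order `⪯` on `ℝⁿ`: all partial sums are compared,
with equality of the total sums. -/
def maj (ξ η : Fin n → ℝ) : Prop :=
  (∀ k : ℕ, k < n → psum ξ k ≤ psum η k) ∧ psum ξ n = psum η n

/-- The geodesic `p #_t q = p^{1/2} (p^{-1/2} q p^{-1/2})^t p^{1/2}` in the trace metric
on positive definite matrices. -/
noncomputable def geo (p q : Matrix (Fin n) (Fin n) ℝ) (t : ℝ) : Matrix (Fin n) (Fin n) ℝ :=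
  mpow p (1/2) * mpow (mpow p (-(1/2)) * q * mpow p (-(1/2))) t * mpow p (1/2)

/-- The Riemannian (trace-metric) distance on positive definite matrices, expressed as the
Euclidean norm of the vector of base-2 logarithms of the eigenvalues of `p^{-1/2} q p^{-1/2}`. -/
noncomputable def rdist (p q : Matrix (Fin n) (Fin n) ℝ) : ℝ :=
  Real.sqrt (∑ i : Fin n,
    (Real.logb 2 (eigsDesc (mpow p (-(1/2)) * q * mpow p (-(1/2))) i)) ^ 2)

/-!
Both sides amount to `(p₁⁻¹ q₁).charpoly = (p₂⁻¹ q₂).charpoly`.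

With `B = p^{-1/2} q^{1/2}`, `d⃗(p,q)` lists the base-2 logarithms of the eigenvalues of `BᵀB`,
which is positive definite with the characteristic polynomial of `p⁻¹ q`; sorted eigenvalues of a
symmetric matrix are determined by its characteristic polynomial. A congruence by `g` replaces
`p⁻¹ q` by its conjugate under `gᵀ`. Conversely, the whitened matrices `p^{-1/2} q p^{-1/2}` of the
two pairs are symmetric with the same spectrum, so `u m₁ uᵀ = m₂` for an orthogonal `u`, and
`g = p₂^{1/2} u p₁^{-1/2}` carries `(p₁, q₁)` to `(p₂, q₂)`.
-/

lemma Matrix.IsHermitian.exists_unitary_conj_eq_of_charpoly_eq {𝕜 ι : Type*} [RCLike 𝕜]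
    [Fintype ι] [DecidableEq ι] {A B : Matrix ι ι 𝕜} (hA : A.IsHermitian) (hB : B.IsHermitian)
    (h : A.charpoly = B.charpoly) : ∃ u ∈ unitary (Matrix ι ι 𝕜), u * A * star u = B := by
  refine ⟨(hB.eigenvectorUnitary * star hA.eigenvectorUnitary : unitary _), Subtype.prop _, ?_⟩
  rw [← Unitary.conjStarAlgAut_apply (S := 𝕜), Unitary.conjStarAlgAut_mul_apply,
    hA.conjStarAlgAut_star_eigenvectorUnitary, (hA.eigenvalues_eq_eigenvalues_iff hB).2 h,
    ← hB.spectral_theorem]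

lemma charpoly_inv_mul_congr {R ι : Type*} [CommRing R] [Fintype ι] [DecidableEq ι]
    {g : Matrix ι ι R} (hg : IsUnit g) (p q : Matrix ι ι R) :
    ((g * p * gᵀ)⁻¹ * (g * q * gᵀ)).charpoly = (p⁻¹ * q).charpoly := by
  have hdet := (isUnit_iff_isUnit_det g).1 hg
  have hdetT : IsUnit gᵀ.det := by rwa [det_transpose]
  calc ((g * p * gᵀ)⁻¹ * (g * q * gᵀ)).charpoly
      = (gᵀ⁻¹ * (p⁻¹ * (g⁻¹ * g) * q * gᵀ)).charpoly := by
        simp only [Matrix.mul_inv_rev, mul_assoc]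
    _ = (p⁻¹ * q * (gᵀ * gᵀ⁻¹)).charpoly := by
        rw [charpoly_mul_comm, nonsing_inv_mul g hdet, mul_one, mul_assoc]
    _ = (p⁻¹ * q).charpoly := by rw [mul_nonsing_inv _ hdetT, mul_one]

lemma posDef_transpose_mul_self {ι : Type*} [Fintype ι] [DecidableEq ι]
    {g : Matrix ι ι ℝ} (hg : IsUnit g) : (gᵀ * g).PosDef := by
  simpa using PosDef.conjTranspose_mul_self g (mulVec_injective_of_isUnit hg)

section MatrixPower

variable {A : Matrix (Fin n) (Fin n) ℝ}

lemma mpow_eq_cfc (hA : A.IsHermitian) (t : ℝ) : mpow A t = cfc (fun x : ℝ => x ^ t) A := by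
  rw [hA.cfc_eq, IsHermitian.cfc, Unitary.conjStarAlgAut_apply, mpow, dif_pos hA]
  rfl

lemma isHermitian_mpow (hA : A.IsHermitian) (t : ℝ) : (mpow A t).IsHermitian :=
  mpow_eq_cfc hA t ▸ cfc_predicate _ A

lemma transpose_mpow (hA : A.IsHermitian) (t : ℝ) : (mpow A t)ᵀ = mpow A t := by
  simpa using (isHermitian_mpow hA t).eq

lemma mpow_add (hA : A.PosDef) (s t : ℝ) : mpow A (s + t) = mpow A s * mpow A t := by
  simp only [mpow_eq_cfc hA.1]
  rw [← cfc_mul _ _ A (hf := (Set.toFinite _).continuousOn _)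
    (hg := (Set.toFinite _).continuousOn _)]
  refine cfc_congr fun x hx => Real.rpow_add ?_ s t
  rw [hA.1.spectrum_real_eq_range_eigenvalues] at hx
  obtain ⟨i, rfl⟩ := hx
  exact hA.eigenvalues_pos i

lemma mpow_zero (hA : A.IsHermitian) : mpow A 0 = 1 := by
  simpa [mpow_eq_cfc hA] using cfc_const_one ℝ A

lemma mpow_one (hA : A.IsHermitian) : mpow A 1 = A := by
  simpa [mpow_eq_cfc hA] using cfc_id' ℝ A

lemma mpow_neg_mul_mpow (hA : A.PosDef) (t : ℝ) : mpow A (-t) * mpow A t = 1 := by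
  rw [← mpow_add hA, neg_add_cancel, mpow_zero hA.1]

lemma mpow_mul_mpow_neg (hA : A.PosDef) (t : ℝ) : mpow A t * mpow A (-t) = 1 := by
  simpa using mpow_neg_mul_mpow hA (-t)

lemma mpow_neg (hA : A.PosDef) (t : ℝ) : mpow A (-t) = (mpow A t)⁻¹ :=
  (inv_eq_left_inv (mpow_neg_mul_mpow hA t)).symm

lemma isUnit_mpow (hA : A.PosDef) (t : ℝ) : IsUnit (mpow A t) :=
  .of_mul_eq_one _ (mpow_mul_mpow_neg hA t)

lemma mpow_half_mul_self (hA : A.PosDef) : mpow A (1/2) * mpow A (1/2) = A := by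
  rw [← mpow_add hA]
  norm_num [mpow_one hA.1]

lemma mpow_neg_half_mul_self (hA : A.PosDef) : mpow A (-(1/2)) * mpow A (-(1/2)) = A⁻¹ := by
  rw [← mpow_add hA]
  norm_num [mpow_neg hA, mpow_one hA.1]

end MatrixPower

section Whitening

def whiten (p q : Matrix (Fin n) (Fin n) ℝ) : Matrix (Fin n) (Fin n) ℝ :=
  mpow p (-(1/2)) * q * mpow p (-(1/2))

variable {p q : Matrix (Fin n) (Fin n) ℝ}

lemma whiten_self (hp : p.PosDef) : whiten p p = 1 := by
  calc whiten p p = mpow p (-(1/2)) * mpow p (1/2) * (mpow p (1/2) * mpow p (-(1/2))) := by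
        rw [whiten]; simp only [mul_assoc]; rw [← mul_assoc (mpow p (1/2)), mpow_half_mul_self hp]
    _ = 1 := by rw [mpow_neg_mul_mpow hp, mpow_mul_mpow_neg hp, one_mul]

lemma mpow_half_mul_whiten_mul_mpow_half (hp : p.PosDef) (q : Matrix (Fin n) (Fin n) ℝ) :
    mpow p (1/2) * whiten p q * mpow p (1/2) = q := by
  simp only [whiten, ← mul_assoc]
  rw [mpow_mul_mpow_neg hp, one_mul, mul_assoc, mpow_neg_mul_mpow hp, mul_one]

lemma isHermitian_whiten (hp : p.IsHermitian) (hq : q.IsHermitian) : (whiten p q).IsHermitian := by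
  simpa only [whiten, (isHermitian_mpow hp _).eq] using
    isHermitian_conjTranspose_mul_mul (mpow p _) hq

lemma charpoly_whiten (hp : p.PosDef) (q : Matrix (Fin n) (Fin n) ℝ) :
    (whiten p q).charpoly = (p⁻¹ * q).charpoly := by
  rw [whiten, mul_assoc, charpoly_mul_comm, mul_assoc, mpow_neg_half_mul_self hp,
    charpoly_mul_comm]

lemma exists_congr_of_charpoly_inv_mul_eq {p₁ q₁ p₂ q₂ : Matrix (Fin n) (Fin n) ℝ}
    (hp₁ : p₁.PosDef) (hq₁ : q₁.PosDef) (hp₂ : p₂.PosDef) (hq₂ : q₂.PosDef)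
    (h : (p₁⁻¹ * q₁).charpoly = (p₂⁻¹ * q₂).charpoly) :
    ∃ g : Matrix (Fin n) (Fin n) ℝ, IsUnit g ∧ g * p₁ * gᵀ = p₂ ∧ g * q₁ * gᵀ = q₂ := by
  obtain ⟨u, hu, hconj⟩ := (isHermitian_whiten hp₁.1 hq₁.1).exists_unitary_conj_eq_of_charpoly_eq
    (isHermitian_whiten hp₂.1 hq₂.1) (by rw [charpoly_whiten hp₁, charpoly_whiten hp₂, h])
  set a₂ := mpow p₂ (1/2)
  set b₁ := mpow p₁ (-(1/2))
  have hgT : (a₂ * u * b₁)ᵀ = b₁ * star u * a₂ := by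
    rw [transpose_mul, transpose_mul, transpose_mpow hp₁.1, transpose_mpow hp₂.1,
      star_eq_conjTranspose, conjTranspose_eq_transpose_of_trivial, mul_assoc]
  have hw : ∀ r, a₂ * u * b₁ * r * (a₂ * u * b₁)ᵀ = a₂ * (u * whiten p₁ r * star u) * a₂ := by
    intro r
    rw [hgT, whiten]
    simp only [mul_assoc]
    rfl
  refine ⟨a₂ * u * b₁, ?_, ?_, ?_⟩
  · exact ((isUnit_mpow hp₂ _).mul (.of_mul_eq_one _ (Unitary.mul_star_self_of_mem hu))).mul
      (isUnit_mpow hp₁ _)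
  · rw [hw, whiten_self hp₁, mul_one, Unitary.mul_star_self_of_mem hu, mul_one,
      mpow_half_mul_self hp₂]
  · rw [hw, hconj, mpow_half_mul_whiten_mul_mpow_half hp₂]

end Whitening

section SortedEigenvalues

open Polynomial

variable {A B : Matrix (Fin n) (Fin n) ℝ}

lemma charpoly_eq_prod_eigsDesc (hA : A.IsHermitian) :
    A.charpoly = ∏ i, (X - C (eigsDesc A i)) := by
  rw [hA.charpoly_eq, eigsDesc, dif_pos hA]
  exact (Equiv.prod_comp (Fin.revPerm.trans (Tuple.sort hA.eigenvalues))
    fun j => X - C (hA.eigenvalues j)).symm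

lemma eigsDesc_eq_eigsDesc_iff (hA : A.IsHermitian) (hB : B.IsHermitian) :
    eigsDesc A = eigsDesc B ↔ A.charpoly = B.charpoly := by
  refine ⟨fun h => by rw [charpoly_eq_prod_eigsDesc hA, charpoly_eq_prod_eigsDesc hB, h],
    fun h => ?_⟩
  have heig := (hA.eigenvalues_eq_eigenvalues_iff hB).2 h
  simp only [eigsDesc, dif_pos hA, dif_pos hB, heig]

lemma eigsDesc_nonneg (hA : A.PosSemidef) (i : Fin n) : 0 ≤ eigsDesc A i := by
  rw [eigsDesc, dif_pos hA.1]
  exact hA.eigenvalues_nonneg _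

lemma eigsDesc_pos (hA : A.PosDef) (i : Fin n) : 0 < eigsDesc A i := by
  rw [eigsDesc, dif_pos hA.1]
  exact hA.eigenvalues_pos _

end SortedEigenvalues

lemma two_mul_sigmaVec (g : Matrix (Fin n) (Fin n) ℝ) (i : Fin n) :
    2 * sigmaVec g i = Real.logb 2 (eigsDesc (gᵀ * g) i) := by
  have hg : (gᵀ * g).PosSemidef := by simpa using posSemidef_conjTranspose_mul_self g
  rw [sigmaVec, svals, Real.logb, Real.logb, Real.log_sqrt (eigsDesc_nonneg hg i)]
  ring

lemma charpoly_transpose_mul_self_mpow {p q : Matrix (Fin n) (Fin n) ℝ} (hp : p.PosDef)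
    (hq : q.PosDef) :
    ((mpow p (-(1/2)) * mpow q (1/2))ᵀ * (mpow p (-(1/2)) * mpow q (1/2))).charpoly
      = (p⁻¹ * q).charpoly := by
  rw [transpose_mul, transpose_mpow hp.1, transpose_mpow hq.1, mul_assoc, charpoly_mul_comm]
  simp only [mul_assoc]
  rw [mpow_half_mul_self hq, ← mul_assoc, mpow_neg_half_mul_self hp]

lemma vecd_eq_vecd_iff {p₁ q₁ p₂ q₂ : Matrix (Fin n) (Fin n) ℝ} (hp₁ : p₁.PosDef)
    (hq₁ : q₁.PosDef) (hp₂ : p₂.PosDef) (hq₂ : q₂.PosDef) :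
    vecd p₁ q₁ = vecd p₂ q₂ ↔ (p₁⁻¹ * q₁).charpoly = (p₂⁻¹ * q₂).charpoly := by
  have hB₁ := posDef_transpose_mul_self ((isUnit_mpow hp₁ (-(1/2))).mul (isUnit_mpow hq₁ (1/2)))
  have hB₂ := posDef_transpose_mul_self ((isUnit_mpow hp₂ (-(1/2))).mul (isUnit_mpow hq₂ (1/2)))
  rw [← charpoly_transpose_mul_self_mpow hp₁ hq₁, ← charpoly_transpose_mul_self_mpow hp₂ hq₂,
    ← eigsDesc_eq_eigsDesc_iff hB₁.1 hB₂.1]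
  unfold vecd
  simp only [two_mul_sigmaVec]
  exact ⟨fun h => funext fun i => Real.logb_injOn_pos one_lt_two (eigsDesc_pos hB₁ i)
    (eigsDesc_pos hB₂ i) (congrFun h i), fun h => by rw [h]⟩

/-- `d⃗(p₁,q₁) = d⃗(p₂,q₂)` iff there is an invertible `g` with
`g p₁ gᵀ = p₂` and `g q₁ gᵀ = q₂`. -/
theorem statement6 {n : ℕ} (p₁ q₁ p₂ q₂ : Matrix (Fin n) (Fin n) ℝ)
    (hp₁ : p₁.PosDef) (hq₁ : q₁.PosDef) (hp₂ : p₂.PosDef) (hq₂ : q₂.PosDef) :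
    vecd p₁ q₁ = vecd p₂ q₂ ↔
      ∃ g : Matrix (Fin n) (Fin n) ℝ, IsUnit g ∧ g * p₁ * gᵀ = p₂ ∧ g * q₁ * gᵀ = q₂ := by
  rw [vecd_eq_vecd_iff hp₁ hq₁ hp₂ hq₂]
  refine ⟨exists_congr_of_charpoly_inv_mul_eq hp₁ hq₁ hp₂ hq₂, ?_⟩
  rintro ⟨g, hg, rfl, rfl⟩
  exact (charpoly_inv_mul_congr hg p₁ q₁).symm
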